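/- Let C be a cartesian closed category with finite products and P : C^op → Pos a universal slat-doctrine. Then the unit of the existential completion commutes with universal quantification: for all objects A, B of C and the projection pr_A : A×B → A, the square ι_A ∘ ∀_{pr_A} = ∀^ex_{pr_A} ∘ ι_{A×B} commutes, where ι_X : P(X) → P^ex(X) sends α to (X,1,α) and ∀^ex_{pr_A} is the right adjoint in P^ex described via exponentials (using 1^B ≅ 1); commutativity is up to isomorphism in the preorder P^ex(A). -/

import Mathlib

open CategoryTheory CategoryTheory.Limits CategoryTheory.MonoidalCategory Opposite
open CategoryTheory.CartesianClosed

universe u v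

variable {C : Type u} [Category.{v} C] [CartesianMonoidalCategory C] [MonoidalClosed C]

/-- The fibre of a slat-doctrine `P : Cᵒᵖ ⥤ Pos` over an object `X` of `C`. -/
abbrev Fib (P : Cᵒᵖ ⥤ PartOrd) (X : C) : Type _ := (P.obj (op X) : Type _)

/-- Reindexing along `f : X ⟶ Y` (the monotone map `P f : P Y → P X`). -/
def rIdx (P : Cᵒᵖ ⥤ PartOrd) {X Y : C} (f : X ⟶ Y) (a : Fib P Y) : Fib P X :=
  (P.map f.op).hom.toFun a

/-- Objects of the fibre of the existential completion over `A`: triples `(A,B,α)` with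
`α ∈ P (A × B)`. -/
abbrev QObj (P : Cᵒᵖ ⥤ PartOrd) (A : C) : Type _ := Σ B : C, Fib P (A ⊗ B)

/-- The order of the existential completion `P^ex`:
`(A,B,α) ≤ (A,C,γ)` iff there is `f : A×B ⟶ C` with `α ≤ P⟨pr_A,f⟩(γ)`. -/
def ExLe (P : Cᵒᵖ ⥤ PartOrd) {A : C} (x y : QObj P A) : Prop :=
  ∃ f : A ⊗ x.1 ⟶ y.1,
    x.2 ≤ rIdx P (CartesianMonoidalCategory.lift (CartesianMonoidalCategory.fst A x.1) f) y.2

/-- Reindexing of the existential completion along `f : X ⟶ Y`. -/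
def QReindex (P : Cᵒᵖ ⥤ PartOrd) {X Y : C} (f : X ⟶ Y) (y : QObj P Y) : QObj P X :=
  ⟨y.1, rIdx P (f ▷ y.1) y.2⟩

/-- The map `⟨pr₁, pr₂, ev⟨pr₂,pr₃⟩⟩ : A₁ × B^{A₂} × A₂ ⟶ A₁ × A₂ × B` (with the triple
products bracketed as shown), where `ev` is the evaluation of the exponential. -/
noncomputable def evMap (A₁ A₂ B : C) : (A₁ ⊗ (A₂ ⟹ B)) ⊗ A₂ ⟶ (A₁ ⊗ A₂) ⊗ B :=
  CartesianMonoidalCategory.lift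
    (CartesianMonoidalCategory.lift
      (CartesianMonoidalCategory.fst _ _ ≫ CartesianMonoidalCategory.fst _ _)
      (CartesianMonoidalCategory.snd _ _))
    (CartesianMonoidalCategory.lift (CartesianMonoidalCategory.snd _ _)
        (CartesianMonoidalCategory.fst _ _ ≫ CartesianMonoidalCategory.snd _ _) ≫
      (ihom.ev A₂).app B)

/-- The universal quantifier `∀^ex_{pr₁}` of the existential completion along
`pr₁ : A₁ × A₂ ⟶ A₁`, defined via exponentials from the universal structure `Au` of `P`:
`(A₁×A₂, B, α) ↦ (A₁, B^{A₂}, ∀_{⟨pr₁,pr₃⟩}(P_{⟨pr₁,pr₂,ev⟨pr₂,pr₃⟩⟩}(α)))`. -/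
noncomputable def exAll (P : Cᵒᵖ ⥤ PartOrd)
    (Au : ∀ {X Y : C}, Fib P (X ⊗ Y) → Fib P X) (A₁ A₂ : C)
    (x : QObj P (A₁ ⊗ A₂)) : QObj P A₁ :=
  ⟨A₂ ⟹ x.1, Au (rIdx P (evMap A₁ A₂ x.1) x.2)⟩

/-- The unit `η_X : P(X) → P^ex(X)`, `α ↦ (X, 1, α)` (using `X × 1 ≅ X`). -/
noncomputable def etaEx (P : Cᵒᵖ ⥤ PartOrd) {X : C} (a : Fib P X) : QObj P X :=
  ⟨𝟙_ C, rIdx P (CartesianMonoidalCategory.fst X (𝟙_ C)) a⟩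

/-- The left adjoint `∃^ex` of the existential completion along a projection
`pr : A × B ⟶ A`: `(A×B, C, γ) ↦ (A, B×C, γ)`. -/
noncomputable def exSum (P : Cᵒᵖ ⥤ PartOrd) (A B : C) (x : QObj P (A ⊗ B)) : QObj P A :=
  ⟨B ⊗ x.1, rIdx P (α_ A B x.1).inv x.2⟩

/-! The unit `ι` lands among the objects `(A, D, P_{pr_A} b)` whose predicate ignores the
witness object `D`. These are stable under `∀^ex_{pr_A}`: the evaluation map followed by the
projection to `A × B` is `pr_A × B`, so Beck–Chevalley turns `(A × B, D, P_{pr} a)` into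
`(A, D^B, P_{pr_A}(∀_{pr_A} a))`. Two such objects with the same predicate `b` are comparable as
soon as there is a map `A × D ⟶ E`, and between `1` and `1^B` there are maps both ways. -/

open CartesianMonoidalCategory

noncomputable def constQ (P : Cᵒᵖ ⥤ PartOrd) {A : C} (D : C) (b : Fib P A) : QObj P A :=
  ⟨D, rIdx P (fst A D) b⟩

omit [MonoidalClosed C] in
lemma etaEx_eq_constQ (P : Cᵒᵖ ⥤ PartOrd) {A : C} (b : Fib P A) :
    etaEx P b = constQ P (𝟙_ C) b :=
  rfl

omit [CartesianMonoidalCategory C] [MonoidalClosed C] in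
lemma rIdx_comp (P : Cᵒᵖ ⥤ PartOrd) {X Y Z : C} (f : X ⟶ Y) (g : Y ⟶ Z) (c : Fib P Z) :
    rIdx P (f ≫ g) c = rIdx P f (rIdx P g c) := by
  simp only [rIdx, op_comp, P.map_comp]
  rfl

omit [MonoidalClosed C] in
lemma exLe_constQ (P : Cᵒᵖ ⥤ PartOrd) {A D E : C} (f : A ⊗ D ⟶ E) (b : Fib P A) :
    ExLe P (constQ P D b) (constQ P E b) := by
  refine ⟨f, le_of_eq ?_⟩
  simp only [constQ, ← rIdx_comp, lift_fst]

lemma evMap_fst (A₁ A₂ B : C) :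
    evMap A₁ A₂ B ≫ fst (A₁ ⊗ A₂) B = fst A₁ (A₂ ⟹ B) ▷ A₂ := by
  ext <;> simp [evMap]

lemma exAll_constQ (P : Cᵒᵖ ⥤ PartOrd) (Au : ∀ {X Y : C}, Fib P (X ⊗ Y) → Fib P X)
    (bc : ∀ {X X' Y : C} (f : X ⟶ X') (a : Fib P (X' ⊗ Y)),
      rIdx P f (Au a) = Au (rIdx P (f ▷ Y) a))
    (A B D : C) (a : Fib P (A ⊗ B)) :
    exAll P Au A B (constQ P D a) = constQ P (B ⟹ D) (Au a) := by
  refine Sigma.ext rfl (heq_of_eq ?_)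
  change Au (rIdx P (evMap A B D) (rIdx P (fst (A ⊗ B) D) a)) = rIdx P (fst A (B ⟹ D)) (Au a)
  rw [← rIdx_comp, evMap_fst, bc]

theorem etaEx_commutes_with_forall_general (P : Cᵒᵖ ⥤ PartOrd)
    (Au : ∀ {X Y : C}, Fib P (X ⊗ Y) → Fib P X)
    (bc : ∀ {X X' Y : C} (f : X ⟶ X') (a : Fib P (X' ⊗ Y)),
      rIdx P f (Au a) = Au (rIdx P (f ▷ Y) a))
    (A B : C) (a : Fib P (A ⊗ B)) :
    ExLe P (etaEx P (Au a)) (exAll P Au A B (etaEx P a)) ∧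
      ExLe P (exAll P Au A B (etaEx P a)) (etaEx P (Au a)) := by
  simp only [etaEx_eq_constQ, exAll_constQ P Au bc]
  exact ⟨exLe_constQ P (MonoidalClosed.curry (toUnit _)) _, exLe_constQ P (toUnit _) _⟩

/-- The unit of the existential completion commutes with universal quantification:
`ι_A (∀_{pr_A} a)` and `∀^ex_{pr_A} (ι_{A×B} a)` are isomorphic in `P^ex(A)`. -/
theorem etaEx_commutes_with_forall (P : Cᵒᵖ ⥤ PartOrd)
    (Au : ∀ {X Y : C}, Fib P (X ⊗ Y) → Fib P X)
    (adj : ∀ {X Y : C} (b : Fib P X) (a : Fib P (X ⊗ Y)),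
      rIdx P (CartesianMonoidalCategory.fst X Y) b ≤ a ↔ b ≤ Au a)
    (bc : ∀ {X X' Y : C} (f : X ⟶ X') (a : Fib P (X' ⊗ Y)),
      rIdx P f (Au a) = Au (rIdx P (f ▷ Y) a))
    (A B : C) (a : Fib P (A ⊗ B)) :
    ExLe P (etaEx P (Au a)) (exAll P Au A B (etaEx P a)) ∧
      ExLe P (exAll P Au A B (etaEx P a)) (etaEx P (Au a)) :=
  etaEx_commutes_with_forall_general P Au bc A B a
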